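/- The image of the determinant homomorphism det : Γ → ℂˣ is exactly the group of sixth roots of unity, and every group homomorphism φ : Γ → ℂˣ equals g ↦ det(g)^k for some integer k. (Equivalently: the group of characters of Γ is cyclic of order 6, generated by the restriction of det.) -/

import Mathlib

open MvPolynomial

/-- Substitution of a 2×2 matrix into a polynomial in two variables:
`tᵢ ↦ gᵢ₁ t₁ + gᵢ₂ t₂`. -/
noncomputable def bsub (g : Matrix (Fin 2) (Fin 2) ℂ) (p : MvPolynomial (Fin 2) ℂ) :
    MvPolynomial (Fin 2) ℂ :=
  aeval (fun i => C (g i 0) * X 0 + C (g i 1) * X 1) p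

lemma bsub_one (p : MvPolynomial (Fin 2) ℂ) : bsub 1 p = p := by
  have : (fun i => C ((1 : Matrix (Fin 2) (Fin 2) ℂ) i 0) * X 0
      + C ((1 : Matrix (Fin 2) (Fin 2) ℂ) i 1) * X 1) = (X : Fin 2 → MvPolynomial (Fin 2) ℂ) := by
    funext i
    fin_cases i <;> simp [Matrix.one_apply]
  rw [bsub, this, aeval_X_left_apply]

lemma bsub_mul (g h : Matrix (Fin 2) (Fin 2) ℂ) (p : MvPolynomial (Fin 2) ℂ) :
    bsub (g * h) p = bsub h (bsub g p) := by
  unfold bsub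
  rw [← AlgHom.comp_apply]
  refine DFunLike.congr_fun ?_ p
  apply algHom_ext
  intro i
  simp [Matrix.mul_apply, Fin.sum_univ_two]
  ring

/-- The binary cubic `t₁³ + t₂³`. -/
noncomputable def cubicDiag : MvPolynomial (Fin 2) ℂ := X 0 ^ 3 + X 1 ^ 3

/-- The stabilizer `Γ` of the binary cubic `t₁³ + t₂³` in `GL₂(ℂ)`. -/
noncomputable def Gamma : Subgroup (GL (Fin 2) ℂ) where
  carrier := {g | bsub (↑g) cubicDiag = cubicDiag}
  one_mem' := bsub_one _
  mul_mem' := by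
    intro g h hg hh
    show bsub (↑(g * h)) cubicDiag = cubicDiag
    rw [Units.val_mul, bsub_mul, hg, hh]
  inv_mem' := by
    intro g hg
    show bsub (↑g⁻¹) cubicDiag = cubicDiag
    have hg' : bsub (↑g) cubicDiag = cubicDiag := hg
    have h1 : bsub ((↑g : Matrix (Fin 2) (Fin 2) ℂ) * (↑g⁻¹ : Matrix (Fin 2) (Fin 2) ℂ)) cubicDiag
        = bsub (↑g⁻¹ : Matrix (Fin 2) (Fin 2) ℂ) cubicDiag := by
      rw [bsub_mul, hg']
    have h2 : (↑g : Matrix (Fin 2) (Fin 2) ℂ) * (↑g⁻¹ : Matrix (Fin 2) (Fin 2) ℂ) = 1 := by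
      rw [← Units.val_mul, mul_inv_cancel, Units.val_one]
    rw [← h1, h2, bsub_one]

/-!
Expanding `(ax + by)³ + (cx + dy)³ = x³ + y³` shows that `Γ` consists of the matrices
`diag(a, d)` and `antidiag(a, d)` with `a³ = d³ = 1`. Their determinants `ad` and `-ad` fill out
the sixth roots of unity, and `det g = 1` forces `g = diag(a, a⁻¹)`, a commutator of `diag(a, 1)`
with the swap. Hence every character of `Γ` factors through `det : Γ → μ₆`, and the characters of
the cyclic group `μ₆` are the powers of the inclusion.
-/

open Matrix.GeneralLinearGroup

lemma bsub_cubicDiag_eq_iff (M : Matrix (Fin 2) (Fin 2) ℂ) :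
    bsub M cubicDiag = cubicDiag ↔
      ∀ x y : ℂ, (M 0 0 * x + M 0 1 * y) ^ 3 + (M 1 0 * x + M 1 1 * y) ^ 3 = x ^ 3 + y ^ 3 := by
  have heval : ∀ v : Fin 2 → ℂ, eval v (bsub M cubicDiag) =
      (M 0 0 * v 0 + M 0 1 * v 1) ^ 3 + (M 1 0 * v 0 + M 1 1 * v 1) ^ 3 := by
    simp [bsub, cubicDiag]
  have hcubic : ∀ v : Fin 2 → ℂ, eval v cubicDiag = v 0 ^ 3 + v 1 ^ 3 := by
    simp [cubicDiag]
  constructor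
  · intro h x y
    simpa [heval, hcubic] using congrArg (eval ![x, y]) h
  · intro h
    refine MvPolynomial.funext fun v => ?_
    rw [heval, hcubic, h]

/- The values at `(1, 0), (0, 1), (1, ±1)` give `a³ + c³ = 1`, `b³ + d³ = 1`, `a²b + c²d = 0`
and `ab² + cd² = 0`; the last two combine to `ab(ad - bc) = 0`. -/
lemma diag_or_antidiag_of_cubic_invariant {a b c d : ℂ} (hdet : a * d - b * c ≠ 0)
    (h : ∀ x y : ℂ, (a * x + b * y) ^ 3 + (c * x + d * y) ^ 3 = x ^ 3 + y ^ 3) :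
    (b = 0 ∧ c = 0 ∧ a ^ 3 = 1 ∧ d ^ 3 = 1) ∨
      (a = 0 ∧ d = 0 ∧ b ^ 3 = 1 ∧ c ^ 3 = 1) := by
  have e₁ := h 1 0
  have e₂ := h 0 1
  have e₃ := h 1 1
  have e₄ := h 1 (-1)
  have hx2y : a ^ 2 * b + c ^ 2 * d = 0 := by linear_combination (e₃ - e₄) / 6 - e₂ / 3
  have hxy2 : a * b ^ 2 + c * d ^ 2 = 0 := by linear_combination (e₃ + e₄) / 6 - e₁ / 3
  have hab : a * b * (a * d - b * c) = 0 := by linear_combination d * hx2y - c * hxy2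
  rcases mul_eq_zero.1 ((mul_eq_zero.1 hab).resolve_right hdet) with rfl | rfl
  · have hc : c ^ 3 = 1 := by linear_combination e₁
    have hc0 : c ^ 2 ≠ 0 := pow_ne_zero 2 (IsUnit.of_pow_eq_one hc three_ne_zero).ne_zero
    obtain rfl : d = 0 :=
      (mul_eq_zero.1 (by linear_combination hx2y : c ^ 2 * d = 0)).resolve_left hc0
    exact Or.inr ⟨rfl, rfl, by linear_combination e₂, hc⟩
  · have hd : d ^ 3 = 1 := by linear_combination e₂
    have hd0 : d ^ 2 ≠ 0 := pow_ne_zero 2 (IsUnit.of_pow_eq_one hd three_ne_zero).ne_zero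
    obtain rfl : c = 0 :=
      (mul_eq_zero.1 (by linear_combination hxy2 : c * d ^ 2 = 0)).resolve_right hd0
    exact Or.inl ⟨rfl, rfl, by linear_combination e₁, hd⟩

theorem mem_Gamma_iff (g : GL (Fin 2) ℂ) :
    g ∈ Gamma ↔ ∃ a d : ℂ, a ^ 3 = 1 ∧ d ^ 3 = 1 ∧
      ((g : Matrix (Fin 2) (Fin 2) ℂ) = !![a, 0; 0, d] ∨
        (g : Matrix (Fin 2) (Fin 2) ℂ) = !![0, a; d, 0]) := by
  change bsub g cubicDiag = cubicDiag ↔ _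
  rw [bsub_cubicDiag_eq_iff]
  have hdet := det_ne_zero g
  rw [Matrix.det_fin_two] at hdet
  generalize (g : Matrix (Fin 2) (Fin 2) ℂ) = M at hdet ⊢
  constructor
  · intro h
    obtain ⟨hb, hc, ha, hd⟩ | ⟨ha, hd, hb, hc⟩ := diag_or_antidiag_of_cubic_invariant hdet h
    · exact ⟨_, _, ha, hd, Or.inl (by conv_lhs => rw [M.eta_fin_two, hb, hc])⟩
    · exact ⟨_, _, hb, hc, Or.inr (by conv_lhs => rw [M.eta_fin_two, ha, hd])⟩
  · rintro ⟨a, d, ha, hd, rfl | rfl⟩ x y <;>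
      simp only [Matrix.of_apply, Matrix.cons_val', Matrix.cons_val_zero, Matrix.cons_val_one,
        Matrix.cons_val_fin_one, zero_mul, add_zero, zero_add]
    · linear_combination x ^ 3 * ha + y ^ 3 * hd
    · linear_combination y ^ 3 * ha + x ^ 3 * hd

lemma exists_mem_Gamma_coe_eq {M : Matrix (Fin 2) (Fin 2) ℂ}
    (hM : ∃ a d : ℂ, a ^ 3 = 1 ∧ d ^ 3 = 1 ∧ (M = !![a, 0; 0, d] ∨ M = !![0, a; d, 0])) :
    ∃ g ∈ Gamma, (g : Matrix (Fin 2) (Fin 2) ℂ) = M := by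
  have hdet : M.det ≠ 0 := by
    obtain ⟨a, d, ha, hd, rfl | rfl⟩ := hM <;> rw [Matrix.det_fin_two_of] <;>
      simp [(IsUnit.of_pow_eq_one ha three_ne_zero).ne_zero,
        (IsUnit.of_pow_eq_one hd three_ne_zero).ne_zero]
  exact ⟨mkOfDetNeZero M hdet, (mem_Gamma_iff _).2 hM, rfl⟩

theorem map_det_Gamma : Subgroup.map det Gamma = rootsOfUnity 6 ℂ := by
  ext ζ
  rw [Subgroup.mem_map, mem_rootsOfUnity, Units.ext_iff, Units.val_pow_eq_pow_val, Units.val_one]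
  constructor
  · rintro ⟨g, hg, rfl⟩
    obtain ⟨a, d, ha, hd, hg | hg⟩ := (mem_Gamma_iff g).1 hg <;>
      rw [val_det_apply, hg, Matrix.det_fin_two_of] <;>
      linear_combination (a ^ 3 + 1) * d ^ 6 * ha + (d ^ 3 + 1) * hd
  · intro hζ
    rcases sq_eq_one_iff.1 (by rw [← pow_mul, hζ] : ((ζ : ℂ) ^ 3) ^ 2 = 1) with h | h
    · obtain ⟨g, hg, hgζ⟩ := exists_mem_Gamma_coe_eq ⟨ζ, 1, h, one_pow 3, Or.inl rfl⟩
      exact ⟨g, hg, Units.ext (by rw [val_det_apply, hgζ, Matrix.det_fin_two_of]; ring)⟩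
    · obtain ⟨g, hg, hgζ⟩ := exists_mem_Gamma_coe_eq
        ⟨1, -ζ, one_pow 3, by rw [neg_pow, h]; norm_num, Or.inr rfl⟩
      exact ⟨g, hg, Units.ext (by rw [val_det_apply, hgζ, Matrix.det_fin_two_of]; ring)⟩

open scoped commutatorElement in
/-- `diag(a, a⁻¹) = ⁅diag(a, 1), w⁆` with `w` the coordinate swap. -/
lemma mem_commutator_Gamma_of_det_eq_one {g : Gamma} (hg : det (g : GL (Fin 2) ℂ) = 1) :
    g ∈ commutator Gamma := by
  have had := congrArg Units.val hg
  rw [val_det_apply, Units.val_one] at had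
  obtain ⟨a, d, ha, hd, hM | hM⟩ := (mem_Gamma_iff g).1 g.2 <;>
    rw [hM, Matrix.det_fin_two_of] at had
  · obtain ⟨t, ht, htM⟩ := exists_mem_Gamma_coe_eq ⟨a, 1, ha, one_pow 3, Or.inl rfl⟩
    obtain ⟨w, hw, hwM⟩ := exists_mem_Gamma_coe_eq ⟨1, 1, one_pow 3, one_pow 3, Or.inr rfl⟩
    have hcomm : ⁅(⟨t, ht⟩ : Gamma), ⟨w, hw⟩⁆ = g := by
      rw [commutatorElement_def, mul_inv_eq_iff_eq_mul, mul_inv_eq_iff_eq_mul]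
      refine Subtype.ext (Units.ext ?_)
      simp only [Subgroup.coe_mul, Units.val_mul, htM, hwM, hM, Matrix.mul_fin_two]
      simp [show d * a = 1 by linear_combination had]
    rw [← hcomm, commutator_def]
    exact Subgroup.commutator_mem_commutator (Subgroup.mem_top _) (Subgroup.mem_top _)
  · -- here `det g = -ad` with `(ad)³ = 1`, so `(det g)³ = -1`
    exfalso
    have : (2 : ℂ) = 0 := by
      linear_combination (-((a * d) ^ 2 - a * d + 1)) * had - d ^ 3 * ha - hd
    norm_num at this

theorem exists_zpow_of_hom_rootsOfUnity {R : Type*} [CommRing R] [IsDomain R] {n : ℕ} [NeZero n]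
    (χ : rootsOfUnity n R →* Rˣ) : ∃ m : ℤ, ∀ ζ, χ ζ = (ζ : Rˣ) ^ m := by
  have hχ (ζ : rootsOfUnity n R) : χ ζ ∈ rootsOfUnity n R := by
    rw [mem_rootsOfUnity, ← map_pow, show ζ ^ n = 1 from Subtype.ext ζ.2, map_one]
  obtain ⟨m, hm⟩ := (χ.codRestrict _ hχ).map_cyclic
  exact ⟨m, fun ζ => congrArg Subtype.val (hm ζ)⟩

theorem exists_zpow_of_ker_le_commutator {G R : Type*} [Group G] [CommRing R] [IsDomain R]
    {n : ℕ} [NeZero n] (ρ : G →* rootsOfUnity n R) (hρ : Function.Surjective ρ)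
    (hker : ρ.ker ≤ commutator G) (φ : G →* Rˣ) :
    ∃ k : ℤ, ∀ g, φ g = (ρ g : Rˣ) ^ k := by
  obtain ⟨k, hk⟩ := exists_zpow_of_hom_rootsOfUnity
    (ρ.liftOfSurjective hρ ⟨φ, hker.trans (Abelianization.commutator_subset_ker φ)⟩)
  exact ⟨k, fun g => by rw [← hk, MonoidHom.liftOfRightInverse_comp_apply]⟩

noncomputable def detGamma : Gamma →* rootsOfUnity 6 ℂ :=
  (det.comp Gamma.subtype).codRestrict _ fun g => map_det_Gamma ▸ Subgroup.mem_map_of_mem det g.2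

lemma detGamma_surjective : Function.Surjective detGamma := by
  rintro ⟨ζ, hζ⟩
  obtain ⟨g, hg, rfl⟩ := Subgroup.mem_map.1 (map_det_Gamma ▸ hζ)
  exact ⟨⟨g, hg⟩, rfl⟩

lemma ker_detGamma_le_commutator : detGamma.ker ≤ commutator Gamma := fun _ hg =>
  mem_commutator_Gamma_of_det_eq_one (congrArg Subtype.val hg)

/-- **Characters of `Γ`.** The image of `det : Γ → ℂˣ` is the group of sixth roots
of unity, and every character of `Γ` is an integer power of `det`. -/
theorem gamma_characters :
    Subgroup.map (Matrix.GeneralLinearGroup.det) Gamma = rootsOfUnity 6 ℂ ∧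
    ∀ φ : Gamma →* ℂˣ, ∃ k : ℤ,
      ∀ g : Gamma, φ g = (Matrix.GeneralLinearGroup.det (↑g : GL (Fin 2) ℂ)) ^ k :=
  ⟨map_det_Gamma, exists_zpow_of_ker_le_commutator detGamma detGamma_surjective
    ker_detGamma_le_commutator⟩
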